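/- arXiv:1603.03557 — 7 statements merged into one kernel-verified Lean document; each statement's English description precedes it below -/
import Mathlib

section
/- Let k ≥ 2, l ≥ 2, and γ ≥ 1. Every k-uniform hypergraph H without isolated vertices whose distance-l domination number is at least γ has at least kγ vertices. Moreover the hypergraph consisting of γ pairwise disjoint k-element edges attains this bound, so n_d(k,γ,l) = kγ. -/
/-- The Berge-adjacency graph of a hypergraph: two distinct vertices are adjacent
iff they share a hyperedge. Berge-path distance in the hypergraph coincides with
graph distance in this graph. -/
def hGraph {V : Type*} (E : Finset (Finset V)) : SimpleGraph V :=
  SimpleGraph.fromRel (fun u v => ∃ e ∈ E, u ∈ e ∧ v ∈ e)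

/-- `D` is a distance-`l` dominating set: every vertex is within Berge distance `l`
of some vertex of `D`. -/
def distDom {V : Type*} (E : Finset (Finset V)) (l : ℕ) (D : Finset V) : Prop :=
  ∀ v : V, ∃ u ∈ D, (hGraph E).Reachable u v ∧ (hGraph E).dist u v ≤ l

/-- The distance-`l` domination number `γ_d(H, l)`. -/
noncomputable def gammad {V : Type*} (E : Finset (Finset V)) (l : ℕ) : ℕ :=
  sInf {n | ∃ D : Finset V, D.card = n ∧ distDom E l D}

lemma hGraph_adj {V : Type*} (E : Finset (Finset V)) {u v : V} (h : u ≠ v)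
    (hw : ∃ e ∈ E, u ∈ e ∧ v ∈ e) : (hGraph E).Adj u v := by
  rw [hGraph, SimpleGraph.fromRel_adj]
  exact ⟨h, Or.inl hw⟩

lemma hGraph_adj_shared {V : Type*} (E : Finset (Finset V)) {u v : V}
    (h : (hGraph E).Adj u v) : ∃ e ∈ E, u ∈ e ∧ v ∈ e := by
  rw [hGraph, SimpleGraph.fromRel_adj] at h
  rcases h.2 with ⟨e, he, h1, h2⟩ | ⟨e, he, h1, h2⟩
  · exact ⟨e, he, h1, h2⟩
  · exact ⟨e, he, h2, h1⟩

lemma reach_dist_two {V : Type*} (E : Finset (Finset V)) {u v w : V} (huv : u ≠ v)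
    (h1 : ∃ e ∈ E, u ∈ e ∧ w ∈ e) (h2 : ∃ e ∈ E, w ∈ e ∧ v ∈ e) :
    (hGraph E).Reachable u v ∧ (hGraph E).dist u v ≤ 2 := by
  by_cases huw : u = w
  · subst huw
    have hadj : (hGraph E).Adj u v := hGraph_adj E huv h2
    refine ⟨hadj.reachable, le_trans
      (SimpleGraph.dist_le (SimpleGraph.Walk.cons hadj SimpleGraph.Walk.nil)) ?_⟩
    simp
  · by_cases hwv : w = v
    · subst hwv
      have hadj : (hGraph E).Adj u w := hGraph_adj E huv h1
      refine ⟨hadj.reachable, le_trans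
        (SimpleGraph.dist_le (SimpleGraph.Walk.cons hadj SimpleGraph.Walk.nil)) ?_⟩
      simp
    · have hadj1 : (hGraph E).Adj u w := hGraph_adj E huw h1
      have hadj2 : (hGraph E).Adj w v := hGraph_adj E hwv h2
      refine ⟨hadj1.reachable.trans hadj2.reachable, le_trans
        (SimpleGraph.dist_le (SimpleGraph.Walk.cons hadj1
          (SimpleGraph.Walk.cons hadj2 SimpleGraph.Walk.nil))) ?_⟩
      simp

/-- In a hypergraph whose edges are "quotient classes", walks preserve the quotient. -/
lemma walk_quot {n k : ℕ} {E : Finset (Finset (Fin n))}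
    (hE : ∀ e ∈ E, ∃ i, ∀ v ∈ e, v.val / k = i) {u v : Fin n}
    (p : (hGraph E).Walk u v) : u.val / k = v.val / k := by
  induction p with
  | nil => rfl
  | @cons a b c h _ ih =>
      obtain ⟨e, he, ha, hb⟩ := hGraph_adj_shared E h
      obtain ⟨i, hi⟩ := hE e he
      rw [hi a ha, ← hi b hb]
      exact ih

theorem stmt1 (k l γ : ℕ) (hk : 2 ≤ k) (hl : 2 ≤ l) (hγ : 1 ≤ γ) :
    -- lower bound: every k-uniform hypergraph without isolated vertices and with
    -- distance-l domination number at least γ has at least k·γ vertices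
    (∀ (V : Type) [Fintype V] (E : Finset (Finset V)),
      (∀ e ∈ E, e.card = k) → (∀ v : V, ∃ e ∈ E, v ∈ e) →
      γ ≤ gammad E l → k * γ ≤ Fintype.card V) ∧
    -- attainment: γ pairwise disjoint k-element edges on k·γ vertices
    (∃ E : Finset (Finset (Fin (k * γ))),
      E.card = γ ∧ (∀ e ∈ E, ∀ f ∈ E, e ≠ f → Disjoint e f) ∧
      (∀ e ∈ E, e.card = k) ∧ (∀ v : Fin (k * γ), ∃ e ∈ E, v ∈ e) ∧
      γ ≤ gammad E l) := by
  have hk0 : 0 < k := by omega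
  constructor
  · -- lower bound
    intro V _ E hUnif hCover hγle
    classical
    choose e he hve using hCover
    -- P S : S is a 2-packing
    set P : Finset V → Prop := fun S => ∀ u ∈ S, ∀ v ∈ S, u ≠ v →
      ¬((hGraph E).Reachable u v ∧ (hGraph E).dist u v ≤ 2) with hP
    set T : Finset (Finset V) := Finset.univ.filter P with hT
    have hTne : T.Nonempty := ⟨∅, by simp [hT, hP]⟩
    obtain ⟨S, hST, hSmax⟩ := T.exists_max_image Finset.card hTne
    have hSP : P S := (Finset.mem_filter.mp hST).2
    -- S is distance-l dominating
    have hdom : distDom E l S := by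
      intro v
      by_contra hno
      push_neg at hno
      have hvS : v ∉ S := by
        intro hv
        have := hno v hv (SimpleGraph.Reachable.refl v)
        rw [SimpleGraph.dist_self] at this
        omega
      have hP' : P (insert v S) := by
        intro a ha b hb hab
        rcases Finset.mem_insert.mp ha with rfl | ha'
        · rcases Finset.mem_insert.mp hb with rfl | hb'
          · exact absurd rfl hab
          · rintro ⟨hr, hd⟩
            have := hno b hb' hr.symm
            rw [SimpleGraph.dist_comm] at this
            omega
        · rcases Finset.mem_insert.mp hb with rfl | hb'
          · rintro ⟨hr, hd⟩
            have := hno a ha' hr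
            omega
          · exact hSP a ha' b hb' hab
      have : insert v S ∈ T := Finset.mem_filter.mpr ⟨Finset.mem_univ _, hP'⟩
      have hle := hSmax _ this
      rw [Finset.card_insert_of_notMem hvS] at hle
      omega
    -- pairwise disjoint edges
    have hdisj : ∀ u ∈ S, ∀ w ∈ S, u ≠ w → Disjoint (e u) (e w) := by
      intro u hu w hw huw
      rw [Finset.disjoint_left]
      intro x hxu hxw
      exact hSP u hu w hw huw
        (reach_dist_two E huw ⟨e u, he u, hve u, hxu⟩ ⟨e w, he w, hxw, hve w⟩)
    have hcard : (S.biUnion e).card = k * S.card := by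
      rw [Finset.card_biUnion hdisj]
      rw [Finset.sum_congr rfl (fun u _ => hUnif (e u) (he u))]
      simp [mul_comm]
    have h1 : k * S.card ≤ Fintype.card V := by
      rw [← hcard]
      exact Finset.card_le_univ _
    have h2 : γ ≤ S.card := le_trans hγle (Nat.sInf_le ⟨S, rfl, hdom⟩)
    calc k * γ ≤ k * S.card := Nat.mul_le_mul_left k h2
      _ ≤ Fintype.card V := h1
  · -- attainment
    classical
    have hkγ : 0 < k * γ := Nat.mul_pos hk0 hγ
    set ed : ℕ → Finset (Fin (k * γ)) :=
      fun i => Finset.univ.filter (fun v => v.val / k = i) with hed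
    have hmem : ∀ i (v : Fin (k * γ)), v ∈ ed i ↔ v.val / k = i := by
      intro i v; simp [hed]
    -- each class as an image
    have hedcard : ∀ i < γ, (ed i).card = k := by
      intro i hi
      have hlt : ∀ j : Fin k, k * i + j.val < k * γ := by
        intro j
        calc k * i + j.val < k * i + k := by omega
          _ = k * (i + 1) := by ring
          _ ≤ k * γ := Nat.mul_le_mul_left k (by omega)
      have himg : ed i = Finset.univ.image
          (fun j : Fin k => (⟨k * i + j.val, hlt j⟩ : Fin (k * γ))) := by
        ext v
        rw [hmem]
        simp only [Finset.mem_image, Finset.mem_univ, true_and]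
        constructor
        · intro hv
          refine ⟨⟨v.val % k, Nat.mod_lt _ hk0⟩, ?_⟩
          apply Fin.ext
          simp only
          rw [← hv]
          exact Nat.div_add_mod v.val k
        · rintro ⟨j, rfl⟩
          simp only
          rw [Nat.mul_add_div hk0]
          simp [Nat.div_eq_of_lt j.isLt]
      rw [himg, Finset.card_image_of_injective _ ?_, Finset.card_univ, Fintype.card_fin]
      intro a b hab
      have := congrArg Fin.val hab
      simp only at this
      exact Fin.ext (by omega)
    have hwit : ∀ i, ∀ hi : i < γ, (⟨k * i, by
        calc k * i < k * i + k := by omega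
          _ = k * (i+1) := by ring
          _ ≤ k * γ := Nat.mul_le_mul_left k hi⟩ : Fin (k * γ)) ∈ ed i := by
      intro i hi
      rw [hmem]
      exact Nat.mul_div_cancel_left i hk0
    set E : Finset (Finset (Fin (k * γ))) := (Finset.range γ).image ed with hE
    have hEmem : ∀ f ∈ E, ∃ i < γ, f = ed i := by
      intro f hf
      simp only [hE, Finset.mem_image, Finset.mem_range] at hf
      obtain ⟨i, hi, rfl⟩ := hf
      exact ⟨i, hi, rfl⟩
    have hquot : ∀ f ∈ E, ∃ i, ∀ v ∈ f, v.val / k = i := by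
      intro f hf
      obtain ⟨i, _, rfl⟩ := hEmem f hf
      exact ⟨i, fun v hv => (hmem i v).mp hv⟩
    refine ⟨E, ?_, ?_, ?_, ?_, ?_⟩
    · -- card
      rw [hE, Finset.card_image_of_injOn, Finset.card_range]
      intro i hi j hj hij
      rw [Finset.mem_coe, Finset.mem_range] at hi hj
      have := hwit i hi
      rw [hij, hmem] at this
      rw [← this]
      exact (Nat.mul_div_cancel_left i hk0).symm
    · -- disjoint
      intro a ha b hb hab
      obtain ⟨i, _, rfl⟩ := hEmem a ha
      obtain ⟨j, _, rfl⟩ := hEmem b hb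
      rw [Finset.disjoint_left]
      intro x hxi hxj
      rw [hmem] at hxi hxj
      exact hab (by rw [← hxi, hxj])
    · -- uniform
      intro f hf
      obtain ⟨i, hi, rfl⟩ := hEmem f hf
      exact hedcard i hi
    · -- cover
      intro v
      have hvγ : v.val / k < γ := Nat.div_lt_of_lt_mul v.isLt
      refine ⟨ed (v.val / k), ?_, (hmem _ v).mpr rfl⟩
      rw [hE]
      exact Finset.mem_image_of_mem ed (Finset.mem_range.mpr hvγ)
    · -- γ ≤ gammad
      have hbound : ∀ D : Finset (Fin (k * γ)), distDom E l D → γ ≤ D.card := by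
        intro D hD
        have hsub : Finset.range γ ⊆ D.image (fun v : Fin (k * γ) => v.val / k) := by
          intro i hi
          rw [Finset.mem_range] at hi
          set w : Fin (k * γ) := ⟨k * i, by
            calc k * i < k * i + k := by omega
              _ = k * (i+1) := by ring
              _ ≤ k * γ := Nat.mul_le_mul_left k (by omega)⟩ with hw
          obtain ⟨u, hu, hr, _⟩ := hD w
          obtain ⟨p⟩ := hr
          have hq := walk_quot hquot p
          simp only [hw] at hq
          rw [Nat.mul_div_cancel_left i hk0] at hq
          rw [Finset.mem_image]
          exact ⟨u, hu, hq⟩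
        calc γ = (Finset.range γ).card := (Finset.card_range γ).symm
          _ ≤ (D.image _).card := Finset.card_le_card hsub
          _ ≤ D.card := Finset.card_image_le
      apply le_csInf
      · refine ⟨(Finset.univ : Finset (Fin (k * γ))).card, Finset.univ, rfl, ?_⟩
        intro v
        exact ⟨v, Finset.mem_univ v, SimpleGraph.Reachable.refl v,
          by simp [SimpleGraph.dist_self]⟩
      · rintro n ⟨D, rfl, hD⟩
        exact hbound D hD
end

section
/- If n is odd and T is a tree on n vertices with radius equal to ⌈(n−1)/2⌉ = (n−1)/2, then T contains a path on n−1 vertices; i.e., T is obtained from a path P_{n−1} by attaching one pendant edge. -/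
/-!
Take a longest geodesic `x → y` of length `d` and its vertex `m` halfway along it. In a tree,
for every vertex `z` the path from `x` or the one from `y` to `z` passes through `m`, so the
eccentricity of `m` is at most `⌈d/2⌉`. Hence `(n - 1) / 2 = r(T) ≤ ⌈d/2⌉`, which for odd `n`
forces `d ≥ n - 2`, and a prefix of the geodesic is the required path.
-/

/-- The radius of a graph. -/
noncomputable def gRadius {V : Type*} (G : SimpleGraph V) : ℕ :=
  sInf {r | ∃ v : V, ∀ u : V, G.dist v u ≤ r}

open SimpleGraph

namespace SimpleGraph

variable {V : Type*} {G : SimpleGraph V}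

lemma Walk.dist_add_dist_eq_of_mem_support {u v w : V} (p : G.Walk u v)
    (hp : p.length = G.dist u v) (hw : w ∈ p.support) :
    G.dist u w + G.dist w v = G.dist u v := by
  classical
  have hsplit := congrArg Walk.length (p.take_spec hw)
  rw [Walk.length_append] at hsplit
  have htake := dist_le (p.takeUntil w hw)
  have hdrop := dist_le (p.dropUntil w hw)
  have htri := (p.takeUntil w hw).reachable.dist_triangle_left v
  omega

/-- The geodesic `x → m → y` is the path from `x` to `y`, which is contained in the walk
`x → z → y`; so `m` lies on the geodesic `x → z` or on the geodesic `z → y`. -/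
lemma IsTree.dist_eq_add_or_dist_eq_add (hT : G.IsTree) {x m y : V}
    (hm : G.dist x m + G.dist m y = G.dist x y) (z : V) :
    G.dist x z = G.dist x m + G.dist m z ∨ G.dist y z = G.dist y m + G.dist m z := by
  classical
  have hconn := hT.connected
  obtain ⟨p, hp⟩ := hconn.exists_walk_length_eq_dist x m
  obtain ⟨q, hq⟩ := hconn.exists_walk_length_eq_dist m y
  obtain ⟨a, ha⟩ := hconn.exists_walk_length_eq_dist x z
  obtain ⟨b, hb⟩ := hconn.exists_walk_length_eq_dist z y
  have hpq : (p.append q).IsPath :=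
    (p.append q).isPath_of_length_eq_dist (by rw [Walk.length_append, hp, hq, hm])
  have hunique : p.append q = (a.append b).bypass :=
    (hT.existsUnique_path x y).unique hpq (a.append b).bypass_isPath
  have hm_pq : m ∈ (p.append q).support :=
    (Walk.mem_support_append_iff _ _).mpr (Or.inl p.end_mem_support)
  rw [hunique] at hm_pq
  rcases (Walk.mem_support_append_iff _ _).mp ((a.append b).support_bypass_subset_support hm_pq)
    with hma | hmb
  · left
    exact (a.dist_add_dist_eq_of_mem_support ha hma).symm
  · right
    rw [dist_comm (u := y), dist_comm (u := y), ← b.dist_add_dist_eq_of_mem_support hb hmb,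
      dist_comm (u := z) (v := m), add_comm]

lemma gRadius_le_of_forall_dist_le {v : V} {r : ℕ} (h : ∀ u, G.dist v u ≤ r) :
    gRadius G ≤ r :=
  Nat.sInf_le ⟨v, h⟩

lemma IsTree.gRadius_le_of_forall_dist_le_dist (hT : G.IsTree) {x y : V}
    (hmax : ∀ a b, G.dist a b ≤ G.dist x y) : gRadius G ≤ (G.dist x y + 1) / 2 := by
  have hconn := hT.connected
  obtain ⟨p, hp⟩ := hconn.exists_walk_length_eq_dist x y
  set d := G.dist x y
  set m := p.getVert (d / 2)
  have hxm : G.dist x m ≤ d / 2 := by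
    have : G.dist x m ≤ (p.take (d / 2)).length := dist_le _
    rw [Walk.take_length] at this
    omega
  have hmy : G.dist m y ≤ d - d / 2 := by
    have : G.dist m y ≤ (p.drop (d / 2)).length := dist_le _
    rw [Walk.drop_length] at this
    omega
  have hm : G.dist x m + G.dist m y = d := by
    have : d ≤ G.dist x m + G.dist m y := hconn.dist_triangle
    omega
  refine gRadius_le_of_forall_dist_le (v := m) fun z => ?_
  rcases hT.dist_eq_add_or_dist_eq_add hm z with h | h
  · have := hmax x z
    omega
  · have := hmax y z
    rw [dist_comm (u := y) (v := m)] at h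
    omega

lemma IsTree.exists_two_mul_gRadius_le_dist_add_one [Finite V] (hT : G.IsTree) :
    ∃ x y, 2 * gRadius G ≤ G.dist x y + 1 := by
  have := hT.connected.nonempty
  obtain ⟨⟨x, y⟩, hmax⟩ := Finite.exists_max fun e : V × V => G.dist e.1 e.2
  dsimp only at hmax
  have := hT.gRadius_le_of_forall_dist_le_dist fun a b => hmax (a, b)
  exact ⟨x, y, by omega⟩

end SimpleGraph

theorem stmt5_general {V : Type*} [Fintype V] (G : SimpleGraph V) (hT : G.IsTree)
    (n : ℕ) (hodd : Odd n)
    (hrad : gRadius G = (n - 1) / 2) :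
    -- T contains a path on n - 1 vertices (a path of length n - 2)
    ∃ (u v : V) (p : G.Walk u v), p.IsPath ∧ p.length = n - 2 := by
  obtain ⟨x, y, hdiam⟩ := hT.exists_two_mul_gRadius_le_dist_add_one
  obtain ⟨p, hp, hlen⟩ := hT.connected.exists_path_of_dist x y
  refine ⟨x, _, p.take (n - 2), hp.take _, ?_⟩
  obtain ⟨k, rfl⟩ := hodd
  rw [Walk.take_length]
  omega

theorem stmt5 {V : Type*} [Fintype V] (G : SimpleGraph V) (hT : G.IsTree)
    (n : ℕ) (hn : Fintype.card V = n) (hodd : Odd n)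
    (hrad : gRadius G = (n - 1) / 2) :
    -- T contains a path on n - 1 vertices (a path of length n - 2)
    ∃ (u v : V) (p : G.Walk u v), p.IsPath ∧ p.length = n - 2 :=
  stmt5_general G hT n hodd hrad
end

section
/- Let T be a tree on n vertices and let m < n be a positive integer. Then there exists a vertex v of T such that, letting C₁,...,C_s be those connected components of T − v all of whose vertices are at distance at most m from v (in T), the total number of vertices in these components is at least m. -/
/-!
Let `u, w` realise the diameter `d` of `T`. If `d ≤ m`, every vertex `v` works, since then all
`n - 1` other vertices lie in components of `T - v` within distance `m` of `v`. Otherwise let `v`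
be the vertex at distance `m` from `u` on the `u`–`w` path. The `m` vertices `x` with
`dist u x < m` lie in the component of `T - v` containing `u`. Every vertex `y` of that component
reaches `w` only through `v`, so `dist y v + dist v w = dist y w ≤ d = m + dist v w`,
i.e. `dist v y ≤ m`.
-/

namespace SimpleGraph

variable {V : Type*} {G : SimpleGraph V}

/-- The branches at `v` are the components of `G - v`. -/
def nearBranchSupport (G : SimpleGraph V) (v : V) (m : ℕ) : Set V :=
  {u | ∃ h : u ≠ v, ∀ w : ({x : V | x ≠ v} : Set V),
    (G.induce {x : V | x ≠ v}).Reachable ⟨u, h⟩ w → G.dist v (w : V) ≤ m}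

lemma compl_singleton_subset_nearBranchSupport {v : V} {m : ℕ} (h : ∀ x, G.dist v x ≤ m) :
    {v}ᶜ ⊆ G.nearBranchSupport v m :=
  fun _ hx => ⟨hx, fun y _ => h y⟩

namespace Walk

lemma dist_start_getVert_of_length_eq_dist {u w : V} {p : G.Walk u w}
    (hp : p.length = G.dist u w) {i : ℕ} (hi : i ≤ p.length) :
    G.dist u (p.getVert i) = i := by
  rw [← length_eq_dist_of_subwalk hp (p.isSubwalk_take i), take_length]
  exact min_eq_left hi

lemma dist_getVert_end_of_length_eq_dist {u w : V} {p : G.Walk u w}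
    (hp : p.length = G.dist u w) (i : ℕ) :
    G.dist (p.getVert i) w = G.dist u w - i := by
  rw [← length_eq_dist_of_subwalk hp (p.isSubwalk_drop i), drop_length, hp]

lemma dist_add_dist_le_length_of_mem_support {x v w : V} (r : G.Walk x w) (hv : v ∈ r.support) :
    G.dist x v + G.dist v w ≤ r.length := by
  classical
  calc G.dist x v + G.dist v w
      ≤ (r.takeUntil v hv).length + (r.dropUntil v hv).length :=
        add_le_add (dist_le _) (dist_le _)
    _ = r.length := by rw [← length_append, take_spec]

end Walk

/-- Vertices strictly closer to `u` than `v` is are joined to `u` by a shortest walk, which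
cannot pass through `v`. -/
lemma reachable_induce_ne_of_dist_lt {u v x : V} (hu : u ≠ v) (hx : x ≠ v)
    (hux : G.Reachable u x) (h : G.dist u x < G.dist u v) :
    (G.induce {y | y ≠ v}).Reachable ⟨u, hu⟩ ⟨x, hx⟩ := by
  classical
  obtain ⟨q, hq⟩ := hux.exists_walk_length_eq_dist
  have hqv : ∀ y ∈ q.support, y ∈ {y | y ≠ v} := by
    rintro y hy rfl
    have := (dist_le (q.takeUntil y hy)).trans (q.length_takeUntil_le_length hy)
    omega
  exact ⟨q.induce _ hqv⟩

lemma IsAcyclic.mem_support_of_isPath_of_notMem_support (hG : G.IsAcyclic) {u v w x : V}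
    {p : G.Walk u w} (hp : p.IsPath) (hvp : v ∈ p.support) (q : G.Walk u x)
    (hvq : v ∉ q.support) (r : G.Walk x w) : v ∈ r.support := by
  classical
  by_contra hvr
  have hpath : (q.append r).bypass = p :=
    congrArg Subtype.val ((hG.subsingleton_path u w).elim ⟨_, (q.append r).bypass_isPath⟩ ⟨p, hp⟩)
  have := (q.append r).support_bypass_subset_support (hpath ▸ hvp)
  rw [Walk.mem_support_append_iff] at this
  exact this.elim hvq hvr

/-- The hypothesis `hv` puts `v` on the `u`–`w` path; a walk from `x` to `w` avoiding `v` would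
produce a second such path. -/
lemma IsTree.dist_eq_dist_add_dist_of_reachable_induce (hG : G.IsTree) {u v w x : V}
    (hu : u ≠ v) (hx : x ≠ v) (hv : G.dist u v + G.dist v w = G.dist u w)
    (hux : (G.induce {y | y ≠ v}).Reachable ⟨u, hu⟩ ⟨x, hx⟩) :
    G.dist x w = G.dist x v + G.dist v w := by
  have hconn := hG.connected
  obtain ⟨p₁, hp₁⟩ := hconn.exists_walk_length_eq_dist u v
  obtain ⟨p₂, hp₂⟩ := hconn.exists_walk_length_eq_dist v w
  have hp : (p₁.append p₂).IsPath :=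
    Walk.isPath_of_length_eq_dist _ (by rw [Walk.length_append, hp₁, hp₂, hv])
  obtain ⟨q₀⟩ := hux
  have hvq : v ∉ (q₀.map (Embedding.induce _).toHom).support := by
    simp only [Walk.support_map, List.mem_map, not_exists, not_and]
    exact fun y _ hy => y.2 hy
  obtain ⟨r, hr⟩ := hconn.exists_walk_length_eq_dist x w
  have hvr := hG.isAcyclic.mem_support_of_isPath_of_notMem_support hp
    ((p₁.mem_support_append_iff p₂).mpr (Or.inl p₁.end_mem_support)) _ hvq r
  exact le_antisymm hconn.dist_triangle (hr ▸ r.dist_add_dist_le_length_of_mem_support hvr)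

lemma IsTree.setOf_dist_lt_subset_nearBranchSupport (hG : G.IsTree) {u v w : V}
    (hw : ∀ a, G.dist a w ≤ G.dist u w) (hv : G.dist u v + G.dist v w = G.dist u w) :
    {x | G.dist u x < G.dist u v} ⊆ G.nearBranchSupport v (G.dist u v) := by
  intro x hx
  have hxv : x ≠ v := by rintro rfl; simp at hx
  have huv : u ≠ v := by rintro rfl; simp at hx
  have hux := reachable_induce_ne_of_dist_lt huv hxv (hG.connected.preconnected u x) hx
  refine ⟨hxv, fun y hy => ?_⟩
  have := hG.dist_eq_dist_add_dist_of_reachable_induce huv y.2 hv (hux.trans hy)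
  have := hw y
  rw [dist_comm]
  omega

lemma Reachable.le_ncard_setOf_dist_lt [Finite V] {u w : V} (h : G.Reachable u w) {m : ℕ}
    (hm : m ≤ G.dist u w) : m ≤ {x | G.dist u x < m}.ncard := by
  obtain ⟨p, hp⟩ := h.exists_walk_length_eq_dist
  have hdist : ∀ i < m, G.dist u (p.getVert i) = i := fun i hi =>
    Walk.dist_start_getVert_of_length_eq_dist hp (by omega)
  calc m = (Set.Iio m).ncard := by simp
    _ ≤ _ := Set.ncard_le_ncard_of_injOn p.getVert (fun i hi => by simp_all)
      fun i hi j hj hij => by rw [← hdist i hi, ← hdist j hj, hij]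

end SimpleGraph

open SimpleGraph

theorem stmt6_general {V : Type*} [Fintype V] (G : SimpleGraph V) (hT : G.IsTree)
    (n m : ℕ) (hn : Fintype.card V = n) (hmn : m < n) :
    -- there is a vertex v such that the components of T - v all of whose
    -- vertices are at distance at most m from v contain at least m vertices in total
    ∃ v : V, m ≤ Set.ncard {u : V | ∃ h : u ≠ v,
      ∀ w : ({x : V | x ≠ v} : Set V),
        (G.induce {x : V | x ≠ v}).Reachable ⟨u, h⟩ w → G.dist v (w : V) ≤ m} := by
  have hconn : G.Connected := hT.connected
  have : Nonempty V := Fintype.card_pos_iff.mp (by omega)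
  obtain ⟨u, w, huw⟩ := G.exists_dist_eq_diam
  have hdiam : ∀ a b, G.dist a b ≤ G.dist u w :=
    huw ▸ fun a b => G.dist_le_diam (connected_iff_ediam_ne_top.mp hconn)
  by_cases hdm : G.dist u w ≤ m
  · obtain ⟨v⟩ := ‹Nonempty V›
    refine ⟨v, ?_⟩
    calc m ≤ n - 1 := by omega
      _ = ({v}ᶜ : Set V).ncard := by
        rw [Set.ncard_compl, Set.ncard_singleton, Nat.card_eq_fintype_card, hn]
      _ ≤ (G.nearBranchSupport v m).ncard := Set.ncard_le_ncard
        (compl_singleton_subset_nearBranchSupport fun x => (hdiam v x).trans hdm)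
  · obtain ⟨p, hp⟩ := hconn.exists_walk_length_eq_dist u w
    have hum : G.dist u (p.getVert m) = m :=
      Walk.dist_start_getVert_of_length_eq_dist hp (by omega)
    have hmw := Walk.dist_getVert_end_of_length_eq_dist hp m
    refine ⟨p.getVert m, ?_⟩
    calc m ≤ {x | G.dist u x < m}.ncard := (hconn u w).le_ncard_setOf_dist_lt (by omega)
      _ ≤ (G.nearBranchSupport (p.getVert m) m).ncard := by
        refine Set.ncard_le_ncard ?_
        simpa only [hum] using
          hT.setOf_dist_lt_subset_nearBranchSupport (v := p.getVert m) (hdiam · w) (by omega)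

theorem stmt6 {V : Type*} [Fintype V] (G : SimpleGraph V) (hT : G.IsTree)
    (n m : ℕ) (hn : Fintype.card V = n) (hm : 0 < m) (hmn : m < n) :
    -- there is a vertex v such that the components of T - v all of whose
    -- vertices are at distance at most m from v contain at least m vertices in total
    ∃ v : V, m ≤ Set.ncard {u : V | ∃ h : u ≠ v,
      ∀ w : ({x : V | x ≠ v} : Set V),
        (G.induce {x : V | x ≠ v}).Reachable ⟨u, h⟩ w → G.dist v (w : V) ≤ m} :=
  stmt6_general G hT n m hn hmn
end

section
/- For every tree T on n vertices and every positive integer j ≤ n, there exists a set W of at most j vertices of T such that every vertex of T is at distance at most ⌈n/(j+1)⌉ from some vertex of W. In other words, the j-radius of T satisfies r_j(T) ≤ ⌈n/(j+1)⌉. -/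
/-!
Root the tree at a vertex `z` and call a vertex set star-convex if, with every member `x`, it
contains every vertex between `z` and `x`. Let `S` be star-convex with at least `r + 1` vertices.
Take `u ∈ S` farthest from `z` and `v` between `z` and `u` with `d(v, u) = r`. The branch of `S`
below `v` lies within `r` of `v` by the choice of `u`, and has at least `r + 1` vertices because it
contains a geodesic from `v` to `u`. What remains of `S` is again star-convex: if it still has
`r + 1` vertices we recurse, otherwise `v` covers it as well, because in a tree the path from `v` to
a remaining vertex passes only through remaining vertices. So `S` is covered by balls of radius `r`
around at most `#S / (r + 1)` centres, which for `r = ⌈n / (j + 1)⌉` is at most `j`.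
-/

open Finset

namespace SimpleGraph

variable {V : Type*} {G : SimpleGraph V} {a b c w x y z : V}

def Between (G : SimpleGraph V) (x y z : V) : Prop :=
  G.dist x y + G.dist y z = G.dist x z

noncomputable instance : Decidable (G.Between x y z) :=
  inferInstanceAs (Decidable (_ = _))

namespace Between

theorem trans_left (hG : G.Connected) (h₁ : G.Between w y z) (h₂ : G.Between w x y) :
    G.Between w x z := by
  have := hG.dist_triangle (u := w) (v := x) (w := z)
  have := hG.dist_triangle (u := x) (v := y) (w := z)
  unfold Between at *
  omega

theorem trans_right (hG : G.Connected) (h₁ : G.Between w x z) (h₂ : G.Between x y z) :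
    G.Between w y z := by
  have := hG.dist_triangle (u := w) (v := x) (w := y)
  have := hG.dist_triangle (u := w) (v := y) (w := z)
  unfold Between at *
  omega

theorem trans_right_left (hG : G.Connected) (h₁ : G.Between w x z) (h₂ : G.Between x y z) :
    G.Between w x y := by
  have := hG.dist_triangle (u := w) (v := y) (w := z)
  have := hG.dist_triangle (u := w) (v := x) (w := y)
  unfold Between at *
  omega

theorem eq_of_swap_right (hG : G.Connected) (h₁ : G.Between x y z) (h₂ : G.Between x z y) :
    y = z := by
  have : G.dist y z = 0 := by
    unfold Between at *
    rw [dist_comm (u := z)] at h₂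
    omega
  exact (hG.dist_eq_zero_iff).1 this

theorem dist_le_of_between (h₁ : G.Between x y z) (h₂ : G.Between x y w)
    (h : G.dist x w ≤ G.dist x z) : G.dist y w ≤ G.dist y z := by
  unfold Between at *
  omega

end Between

theorem between_self_left : G.Between x x y := by simp [Between]

theorem Connected.exists_between_dist_eq (hG : G.Connected) {k : ℕ} (hk : k ≤ G.dist x z) :
    ∃ y, G.Between x y z ∧ G.dist y z = k := by
  obtain ⟨p, hp⟩ := hG.exists_walk_length_eq_dist x z
  have h₁ := dist_le (p.take (G.dist x z - k))
  have h₂ := dist_le (p.drop (G.dist x z - k))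
  have := hG.dist_triangle (u := x) (v := p.getVert (G.dist x z - k)) (w := z)
  simp only [Walk.take_length, Walk.drop_length] at h₁ h₂
  refine ⟨p.getVert (G.dist x z - k), ?_, ?_⟩
  · unfold Between
    omega
  · omega

theorem Connected.dist_add_one_le_card (hG : G.Connected) {s : Finset V}
    (hs : ∀ y, G.Between x y z → y ∈ s) : G.dist x z + 1 ≤ #s := by
  have hsub : Set.Iic (G.dist x z) ⊆ (G.dist · z) '' s := fun k hk => by
    obtain ⟨y, hy, rfl⟩ := hG.exists_between_dist_eq hk
    exact ⟨y, hs y hy, rfl⟩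
  simpa using (Set.ncard_le_ncard hsub).trans Set.ncard_image_le

theorem IsTree.length_eq_dist_of_isPath (hG : G.IsTree) {p : G.Walk x z} (hp : p.IsPath) :
    p.length = G.dist x z := by
  obtain ⟨q, hq, hlen⟩ := hG.connected.exists_path_of_dist x z
  rw [(hG.existsUnique_path x z).unique hp hq, hlen]

theorem IsTree.between_iff_mem_support (hG : G.IsTree) {p : G.Walk x z} (hp : p.IsPath) :
    G.Between x y z ↔ y ∈ p.support := by
  classical
  constructor
  · intro h
    obtain ⟨q₁, hq₁⟩ := hG.connected.exists_walk_length_eq_dist x y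
    obtain ⟨q₂, hq₂⟩ := hG.connected.exists_walk_length_eq_dist y z
    have hq : (q₁.append q₂).IsPath := (q₁.append q₂).isPath_of_length_eq_dist <| by
      rw [Walk.length_append, hq₁, hq₂]
      exact h
    rw [(hG.existsUnique_path x z).unique hp hq]
    exact (Walk.mem_support_append_iff _ _).2 (Or.inl q₁.end_mem_support)
  · intro hy
    have h₁ := hG.length_eq_dist_of_isPath (hp.takeUntil hy)
    have h₂ := hG.length_eq_dist_of_isPath (hp.dropUntil hy)
    have h₃ := congrArg Walk.length (p.take_spec hy)
    rw [Walk.length_append, hG.length_eq_dist_of_isPath hp] at h₃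
    unfold Between
    omega

theorem IsTree.between_or_between (hG : G.IsTree) (h : G.Between a y b) (c : V) :
    G.Between c y a ∨ G.Between c y b := by
  classical
  obtain ⟨p, hp, -⟩ := hG.connected.exists_path_of_dist c a
  obtain ⟨q, hq, -⟩ := hG.connected.exists_path_of_dist c b
  have hy : y ∈ (p.reverse.append q).support :=
    (p.reverse.append q).support_bypass_subset_support
      ((hG.between_iff_mem_support (p.reverse.append q).bypass_isPath).1 h)
  rw [Walk.mem_support_append_iff, Walk.support_reverse, List.mem_reverse] at hy
  rw [hG.between_iff_mem_support hp, hG.between_iff_mem_support hq]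
  exact hy

def StarConvex (G : SimpleGraph V) (x : V) (s : Set V) : Prop :=
  ∀ ⦃z⦄, z ∈ s → ∀ ⦃y⦄, G.Between x y z → y ∈ s

theorem StarConvex.dist_lt_card (hG : G.Connected) {s : Finset V} (hs : G.StarConvex x s)
    (hz : z ∈ s) : G.dist x z < #s :=
  hG.dist_add_one_le_card fun _ hy => hs hz hy

theorem StarConvex.filter_not_between (hG : G.Connected) {s : Finset V} (hs : G.StarConvex x s)
    (y : V) : G.StarConvex x ↑(s.filter (¬ G.Between x y ·)) := by
  intro z hz w hw
  simp only [coe_filter, Set.mem_ofPred_eq] at hz ⊢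
  exact ⟨hs hz.1 hw, fun hyw => hz.2 (hw.trans_left hG hyw)⟩

theorem IsTree.starConvex_insert_filter_not_between [DecidableEq V] (hG : G.IsTree)
    {s : Finset V} (hs : G.StarConvex x s) (hy : y ∈ s) :
    G.StarConvex y ↑(insert y (s.filter (¬ G.Between x y ·))) := by
  intro z hz w hw
  simp only [coe_insert, coe_filter, Set.mem_insert_iff, Set.mem_ofPred_eq] at hz ⊢
  rcases hz with rfl | ⟨hz, hxz⟩
  · exact .inl (hw.eq_of_swap_right hG.connected between_self_left)
  rcases hG.between_or_between hw x with hxw | hxw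
  · by_cases hxw' : G.Between x y w
    · exact .inl (hxw'.eq_of_swap_right hG.connected hxw).symm
    · exact .inr ⟨hs hy hxw, hxw'⟩
  · exact .inr ⟨hs hz hxw, fun hyw => hxz (hxw.trans_left hG.connected hyw)⟩

theorem IsTree.exists_cover_of_starConvex [DecidableEq V] (hG : G.IsTree) (r : ℕ)
    {S : Finset V} (hS : G.StarConvex z S) (hz : z ∈ S) (hr : r + 1 ≤ #S) :
    ∃ D : Finset V, (r + 1) * #D ≤ #S ∧ ∀ x ∈ S, ∃ c ∈ D, G.dist c x ≤ r := by
  induction hcard : #S using Nat.strong_induction_on generalizing S with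
  | _ m ih =>
  obtain ⟨u, hu, hmax⟩ := S.exists_max_image (G.dist z) ⟨z, hz⟩
  by_cases hzu : G.dist z u ≤ r
  · exact ⟨{z}, by simpa [hcard] using hr,
      fun x hx => ⟨z, mem_singleton_self z, (hmax x hx).trans hzu⟩⟩
  obtain ⟨v, hv, hvu⟩ := hG.connected.exists_between_dist_eq (by omega : r ≤ G.dist z u)
  set B := S.filter (G.Between z v)
  set R := S.filter (¬ G.Between z v ·)
  have hBR : #B + #R = #S := card_filter_add_card_filter_not _
  have hB : ∀ x ∈ B, G.dist v x ≤ r := fun x hx =>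
    hvu ▸ hv.dist_le_of_between (mem_filter.1 hx).2 (hmax x (mem_filter.1 hx).1)
  have hBcard : r + 1 ≤ #B := hvu ▸ hG.connected.dist_add_one_le_card fun y hy =>
    mem_filter.2 ⟨hS hu (hv.trans_right hG.connected hy), hv.trans_right_left hG.connected hy⟩
  by_cases hRcard : #R < r + 1
  · refine ⟨{v}, by rw [card_singleton]; omega, fun x hx => ⟨v, mem_singleton_self v, ?_⟩⟩
    by_cases hvx : G.Between z v x
    · exact hB x (mem_filter.2 ⟨hx, hvx⟩)
    · have hRv : G.StarConvex v ↑(insert v R) :=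
        hG.starConvex_insert_filter_not_between hS (hS hu hv)
      have := hRv.dist_lt_card hG.connected (mem_insert_of_mem (mem_filter.2 ⟨hx, hvx⟩))
      have := card_insert_le v R
      omega
  · have hzR : z ∈ R := mem_filter.2 ⟨hz, fun hzv => by
      obtain rfl := hzv.eq_of_swap_right hG.connected between_self_left
      omega⟩
    have hR : G.StarConvex z R := hS.filter_not_between hG.connected v
    obtain ⟨D, hD, hDcov⟩ := ih #R (by omega) hR hzR (by omega) rfl
    refine ⟨insert v D, ?_, fun x hx => ?_⟩
    · have := card_insert_le v D
      nlinarith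
    · by_cases hvx : G.Between z v x
      · exact ⟨v, mem_insert_self v D, hB x (mem_filter.2 ⟨hx, hvx⟩)⟩
      · obtain ⟨c, hc, hcx⟩ := hDcov x (mem_filter.2 ⟨hx, hvx⟩)
        exact ⟨c, mem_insert_of_mem hc, hcx⟩

end SimpleGraph

theorem stmt7_general {V : Type*} [Fintype V] (G : SimpleGraph V) (hT : G.IsTree)
    (n j : ℕ) (hn : Fintype.card V = n) (hj : 0 < j) :
    -- r_j(T) ≤ ⌈n/(j+1)⌉ = (n+j)/(j+1) (ℕ-division)
    ∃ W : Finset V, W.card ≤ j ∧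
      ∀ u : V, ∃ w ∈ W, G.dist w u ≤ (n + j) / (j + 1) := by
  classical
  set r := (n + j) / (j + 1) with hr
  have hnr : n ≤ (j + 1) * r := by
    have := Nat.div_add_mod (n + j) (j + 1)
    have := Nat.mod_lt (n + j) (by omega : 0 < j + 1)
    rw [← hr] at *
    omega
  obtain ⟨z⟩ := hT.connected.nonempty
  have huniv : G.StarConvex z ↑(univ : Finset V) := fun _ _ _ _ => mem_coe.2 (mem_univ _)
  by_cases hrn : r + 1 ≤ n
  · obtain ⟨D, hD, hcov⟩ := hT.exists_cover_of_starConvex r huniv (mem_univ z) (by simpa [hn])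
    refine ⟨D, ?_, fun u => hcov u (mem_univ u)⟩
    rw [card_univ, hn] at hD
    by_contra!
    nlinarith
  · refine ⟨{z}, by rw [card_singleton]; exact hj, fun u => ⟨z, mem_singleton_self z, ?_⟩⟩
    have := huniv.dist_lt_card hT.connected (mem_univ u)
    rw [card_univ] at this
    omega

theorem stmt7 {V : Type*} [Fintype V] (G : SimpleGraph V) (hT : G.IsTree)
    (n j : ℕ) (hn : Fintype.card V = n) (hj : 0 < j) (hjn : j ≤ n) :
    -- r_j(T) ≤ ⌈n/(j+1)⌉ = (n+j)/(j+1) (ℕ-division)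
    ∃ W : Finset V, W.card ≤ j ∧
      ∀ u : V, ∃ w ∈ W, G.dist w u ≤ (n + j) / (j + 1) :=
  stmt7_general G hT n j hn hj
end

section
/- For positive integers n ≥ j, the spider tree S(⌊(n−1)/(j+1)⌋, ⌊n/(j+1)⌋, ..., ⌊(n+j−1)/(j+1)⌋) with j+1 legs has j-radius at least ⌊n/(j+1)⌋; consequently r_j(n) := max over trees T on n vertices of r_j(T) satisfies r_j(n) ≥ ⌊n/(j+1)⌋. -/
/-- The spider graph `S(a₁,…,a_h)`: `h` paths of lengths `a i` with their first
vertices identified to a single center vertex (represented by `none`). The vertex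
`some ⟨i, k⟩` is the `(k+1)`-st vertex (after the center) on the `i`-th leg. -/
def spider (h : ℕ) (a : Fin h → ℕ) : SimpleGraph (Option (Σ i : Fin h, Fin (a i))) :=
  SimpleGraph.fromRel (fun x y =>
    (∃ (i : Fin h) (kk : Fin (a i)), x = none ∧ y = some ⟨i, kk⟩ ∧ (kk : ℕ) = 0) ∨
    (∃ (i : Fin h) (kk ll : Fin (a i)),
      x = some ⟨i, kk⟩ ∧ y = some ⟨i, ll⟩ ∧ (kk : ℕ) + 1 = (ll : ℕ)))


/-!
Every edge of a spider joins a vertex to its parent, one step closer to the center, so the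
spider is a tree. The leg lengths `⌊(n - 1 + i)/(j + 1)⌋`, `i < j + 1`, sum to `n - 1`
(Hermite's identity); all of them are at least `m = ⌊n/(j + 1)⌋` except the first, which is at
least `m - 1`. A set `W` of at most `j` vertices misses one of the `j + 1` legs, and if the
only leg it misses is the first, then it also misses the center. The distance from a vertex
`w` off leg `i` to the far end of leg `i` is at least `a i + depth w`, because the potential
equal to `a i + depth` off leg `i` and to `a i - depth` on it is 1-Lipschitz and vanishes at
that end; this is at least `m` in both cases.
-/

open Finset

namespace SimpleGraph

variable {V : Type*} {G : SimpleGraph V}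

/-- A cycle through a vertex `u` of maximal depth would give `u` two distinct neighbours of
smaller depth, both of which must be the parent of `u`. -/
theorem isAcyclic_of_parent (p : V → V) (d : V → ℕ) (hne : ∀ ⦃x y⦄, G.Adj x y → d x ≠ d y)
    (hp : ∀ ⦃x y⦄, G.Adj x y → d x < d y → x = p y) : G.IsAcyclic := by
  classical
  intro v c hc
  obtain ⟨u, hu, hmax⟩ := c.support.toFinset.exists_max_image d ⟨v, by simp⟩
  rw [List.mem_toFinset] at hu
  have hc' : (c.rotate u hu).IsCycle := hc.rotate hu
  have eq_parent : ∀ w ∈ (c.rotate u hu).support, G.Adj u w → w = p u := fun w hw hadj =>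
    hp hadj.symm <| (hmax w <| by simpa using hw).lt_of_ne (hne hadj).symm
  exact hc'.snd_ne_penultimate <|
    (eq_parent _ (Walk.getVert_mem_support _ _) (Walk.adj_snd hc'.not_nil)).trans
      (eq_parent _ (Walk.getVert_mem_support _ _) (Walk.adj_penultimate hc'.not_nil).symm).symm

theorem Walk.le_add_length_of_lipschitz (f : V → ℕ) (hf : ∀ ⦃x y⦄, G.Adj x y → f x ≤ f y + 1)
    {u v : V} (p : G.Walk u v) : f u ≤ f v + p.length := by
  induction p with
  | nil => simp
  | cons hadj _ ih => grind [Walk.length_cons]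

theorem Reachable.le_add_dist_of_lipschitz (f : V → ℕ)
    (hf : ∀ ⦃x y⦄, G.Adj x y → f x ≤ f y + 1) {u v : V} (huv : G.Reachable u v) :
    f u ≤ f v + G.dist u v := by
  obtain ⟨p, hp⟩ := huv.exists_walk_length_eq_dist
  exact hp ▸ p.le_add_length_of_lipschitz f hf

end SimpleGraph

theorem Nat.sum_range_add_div_self (H : ℕ) (hH : 0 < H) :
    ∀ m : ℕ, ∑ i ∈ range H, (m + i) / H = m
  | 0 => sum_eq_zero fun i hi => Nat.div_eq_of_lt (by simpa using hi)
  | m + 1 => by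
    have shift := sum_range_succ (fun i => (m + i) / H) H
    rw [sum_range_succ', Nat.add_div_right m hH, Nat.sum_range_add_div_self H hH m] at shift
    simp only [← Nat.add_assoc, Nat.add_right_comm m _ 1, Nat.add_zero] at shift
    omega

namespace Spider

variable {h : ℕ} {a : Fin h → ℕ}

def depth : Option (Σ i : Fin h, Fin (a i)) → ℕ
  | none => 0
  | some ⟨_, k⟩ => k + 1

def parent : Option (Σ i : Fin h, Fin (a i)) → Option (Σ i : Fin h, Fin (a i))
  | none => none
  | some ⟨i, k⟩ => if hk : (k : ℕ) = 0 then none else some ⟨i, ⟨k - 1, by omega⟩⟩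

def leg : Option (Σ i : Fin h, Fin (a i)) → Option (Fin h) :=
  Option.map Sigma.fst

def legEnd (i : Fin h) : Option (Σ i : Fin h, Fin (a i)) :=
  if hi : a i = 0 then none else some ⟨i, ⟨a i - 1, by omega⟩⟩

def distLegEnd (i : Fin h) (w : Option (Σ i : Fin h, Fin (a i))) : ℕ :=
  if leg w = some i then a i - depth w else a i + depth w

theorem adj_cases {x y : Option (Σ i : Fin h, Fin (a i))} (hxy : (spider h a).Adj x y) :
    (x = parent y ∧ depth y = depth x + 1) ∨ (y = parent x ∧ depth x = depth y + 1) := by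
  rw [spider, SimpleGraph.fromRel_adj] at hxy
  obtain ⟨-, hr | hr⟩ := hxy <;> [left; right] <;>
    rcases hr with ⟨i, k, rfl, rfl, hk⟩ | ⟨i, k, l, rfl, rfl, hkl⟩
  all_goals
    simp only [parent, depth]
    split_ifs <;> simp [Fin.ext_iff] <;> omega

theorem reachable_none (w : Option (Σ i : Fin h, Fin (a i))) : (spider h a).Reachable w none := by
  obtain _ | ⟨i, k, hk⟩ := w
  · rfl
  induction k with
  | zero =>
    refine SimpleGraph.Adj.reachable ?_
    rw [spider, SimpleGraph.fromRel_adj]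
    exact ⟨by simp, Or.inr (Or.inl ⟨i, ⟨0, hk⟩, rfl, rfl, rfl⟩)⟩
  | succ k ih =>
    refine SimpleGraph.Reachable.trans (SimpleGraph.Adj.reachable ?_) (ih (by omega))
    rw [spider, SimpleGraph.fromRel_adj]
    exact ⟨by simp, Or.inr (Or.inr ⟨i, ⟨k, by omega⟩, ⟨k + 1, hk⟩, rfl, rfl, rfl⟩)⟩

theorem distLegEnd_le_of_adj (i : Fin h) {x y : Option (Σ i : Fin h, Fin (a i))}
    (hxy : (spider h a).Adj x y) : distLegEnd i x ≤ distLegEnd i y + 1 := by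
  rw [spider, SimpleGraph.fromRel_adj] at hxy
  obtain ⟨-, (⟨i', k, rfl, rfl, hk⟩ | ⟨i', k, l, rfl, rfl, hkl⟩) |
    (⟨i', k, rfl, rfl, hk⟩ | ⟨i', k, l, rfl, rfl, hkl⟩)⟩ := hxy
  all_goals
    have := k.isLt
    simp only [distLegEnd, leg, depth, Option.map_some, Option.map_none, Option.some.injEq,
      reduceCtorEq, if_false]
    split_ifs <;> omega

end Spider

open Spider in
theorem spider_connected (h : ℕ) (a : Fin h → ℕ) : (spider h a).Connected :=
  (SimpleGraph.connected_iff _).2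
    ⟨fun x y => (reachable_none x).trans (reachable_none y).symm, ⟨none⟩⟩

open Spider in
theorem spider_isTree (h : ℕ) (a : Fin h → ℕ) : (spider h a).IsTree := by
  refine ⟨spider_connected h a, SimpleGraph.isAcyclic_of_parent parent depth ?_ ?_⟩
  · intro x y hxy
    rcases adj_cases hxy with ⟨-, hd⟩ | ⟨-, hd⟩ <;> omega
  · intro x y hxy hlt
    rcases adj_cases hxy with ⟨hx, -⟩ | ⟨-, hd⟩
    exacts [hx, by omega]

namespace Spider

variable {h : ℕ} {a : Fin h → ℕ}

theorem add_depth_le_dist_legEnd {i : Fin h} {w : Option (Σ i : Fin h, Fin (a i))}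
    (hw : leg w ≠ some i) :
    a i + depth w ≤ (spider h a).dist w (legEnd i) := by
  have hlip := ((spider_connected h a).preconnected w (legEnd i)).le_add_dist_of_lipschitz
    (distLegEnd i) fun _ _ => distLegEnd_le_of_adj i
  have hend : distLegEnd i (legEnd (a := a) i) = 0 := by
    unfold legEnd
    split_ifs with hi
    · simp [distLegEnd, leg, depth, hi]
    · simp only [distLegEnd, leg, depth, Option.map_some, if_true]
      omega
  rw [hend, distLegEnd, if_neg hw, Nat.zero_add] at hlip
  exact hlip

theorem exists_le_dist_of_card_lt {m : ℕ} (i₀ : Fin h)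
    (ha : ∀ i, m ≤ a i + 1) (ha' : ∀ i ≠ i₀, m ≤ a i)
    (W : Finset (Option (Σ i : Fin h, Fin (a i)))) (hW : #W < h) :
    ∃ u, ∀ w ∈ W, m ≤ (spider h a).dist w u := by
  -- Counting the center as a vertex of leg `i₀`, some leg `i` contains no vertex of `W`.
  obtain ⟨i, -, hi⟩ := exists_mem_notMem_of_card_lt_card (s := W.image fun w => (leg w).getD i₀)
    (t := univ) (card_image_le.trans_lt (by simpa using hW))
  refine ⟨legEnd i, fun w hw => ?_⟩
  have hwi : (leg w).getD i₀ ≠ i := fun hwi => hi (mem_image.2 ⟨w, hw, hwi⟩)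
  refine le_trans ?_ (add_depth_le_dist_legEnd fun hwl => hwi (by rw [hwl]; rfl))
  obtain _ | ⟨i', k⟩ := w
  · exact ha' i (Ne.symm hwi)
  · exact (ha i).trans (by simp [depth])

end Spider

theorem stmt8 (n j : ℕ) (hj : 0 < j) (hjn : j ≤ n) :
    -- the spider S(⌊(n-1)/(j+1)⌋, …, ⌊(n+j-1)/(j+1)⌋) with j+1 legs ...
    (spider (j + 1) (fun i => (n - 1 + (i : ℕ)) / (j + 1))).IsTree ∧
    -- ... is a tree on n vertices ...
    Fintype.card (Option (Σ i : Fin (j + 1), Fin ((n - 1 + (i : ℕ)) / (j + 1)))) = n ∧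
    -- ... with j-radius at least ⌊n/(j+1)⌋; hence r_j(n) ≥ ⌊n/(j+1)⌋
    (∀ W : Finset (Option (Σ i : Fin (j + 1), Fin ((n - 1 + (i : ℕ)) / (j + 1)))),
      W.card ≤ j → ∃ u, ∀ w ∈ W,
        n / (j + 1) ≤ (spider (j + 1) (fun i => (n - 1 + (i : ℕ)) / (j + 1))).dist w u) := by
  refine ⟨spider_isTree _ _, ?_, fun W hW => Spider.exists_le_dist_of_card_lt 0 ?_ ?_ W (by omega)⟩
  · have hsum := Nat.sum_range_add_div_self (j + 1) j.succ_pos (n - 1)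
    rw [← Fin.sum_univ_eq_sum_range (fun i => (n - 1 + i) / (j + 1))] at hsum
    simp only [Fintype.card_option, Fintype.card_sigma, Fintype.card_fin, hsum]
    omega
  · intro i
    calc n / (j + 1) ≤ (n - 1 + (j + 1)) / (j + 1) := Nat.div_le_div_right (by omega)
      _ = (n - 1) / (j + 1) + 1 := Nat.add_div_right _ j.succ_pos
      _ ≤ _ := by gcongr; omega
  · intro i hi
    exact Nat.div_le_div_right (by have := Fin.pos_iff_ne_zero.2 hi; omega)
end

section
/- Let G be a graph with a maximum matching M. Then for every edge e = (u,v) of M, there do not exist two distinct vertices u', v' outside V(M) with u' adjacent to u and v' adjacent to v. Consequently, every edge of M has an endpoint whose neighborhood outside V(M) contains the neighborhood outside V(M) of the other endpoint. -/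
/-!
If a maximum matching `M` had an edge `uv` with distinct unmatched vertices `u' ~ u` and
`v' ~ v`, replacing `uv` by `uu'` and `vv'` would give a larger matching. Hence if neither
endpoint's unmatched neighbourhood contains the other's, picking `v'` in the first but not
the second and `u'` in the second but not the first yields such a forbidden pair.
-/

namespace SimpleGraph.Subgraph.IsMatching

variable {V : Type*} {G : SimpleGraph V} {M : G.Subgraph}

lemma deleteVerts (hM : M.IsMatching) {s : Set V}
    (hs : ∀ ⦃a b⦄, M.Adj a b → a ∈ s → b ∈ s) : (M.deleteVerts s).IsMatching := by
  rintro w ⟨hwM, hws⟩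
  obtain ⟨x, hx, huniq⟩ := hM hwM
  refine ⟨x, deleteVerts_adj.mpr ⟨hwM, hws, M.edge_vert hx.symm, ?_, hx⟩,
    fun y hy => huniq y (deleteVerts_adj.mp hy).2.2.2.2⟩
  exact fun hxs => hws (hs hx.symm hxs)

lemma deleteVerts_pair (hM : M.IsMatching) {u v : V} (huv : M.Adj u v) :
    (M.deleteVerts {u, v}).IsMatching := by
  refine hM.deleteVerts fun a b hab ha => ?_
  rcases ha with rfl | rfl
  · exact .inr (hM.eq_of_adj_left hab huv)
  · exact .inl (hM.eq_of_adj_left hab huv.symm)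

lemma edgeSet_deleteVerts_pair (hM : M.IsMatching) {u v : V} (huv : M.Adj u v) :
    (M.deleteVerts {u, v}).edgeSet = M.edgeSet \ {s(u, v)} := by
  ext e
  refine Sym2.ind (fun a b => ?_) e
  have hpartner {x y z : V} (hxy : M.Adj x y) (hxz : M.Adj x z) : y = z :=
    hM.eq_of_adj_left hxy hxz
  rw [Set.mem_sdiff, Subgraph.mem_edgeSet, Subgraph.mem_edgeSet, deleteVerts_adj,
    Set.mem_singleton_iff, Sym2.eq_iff]
  constructor
  · rintro ⟨-, hau, -, hbu, hab⟩
    grind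
  · rintro ⟨hab, hne⟩
    refine ⟨M.edge_vert hab, ?_, M.edge_vert hab.symm, ?_, hab⟩ <;> grind [Adj.symm]

lemma exists_edgeSet_eq_augment (hM : M.IsMatching) {u v u' v' : V} (huv : M.Adj u v)
    (hu' : u' ∉ M.verts) (hv' : v' ∉ M.verts) (hne : u' ≠ v') (hGu : G.Adj u u')
    (hGv : G.Adj v v') : ∃ M' : G.Subgraph, M'.IsMatching ∧
      M'.edgeSet = insert s(v, v') (insert s(u, u') (M.edgeSet \ {s(u, v)})) := by
  have hu := M.edge_vert huv
  have hv := M.edge_vert huv.symm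
  have huv_ne := (M.adj_sub huv).ne
  have hdisj₁ : Disjoint (M.deleteVerts {u, v}).verts (G.subgraphOfAdj hGu).verts := by
    simp only [deleteVerts_verts, subgraphOfAdj_verts, Set.disjoint_right]
    grind
  have hdisj₂ : Disjoint (M.deleteVerts {u, v} ⊔ G.subgraphOfAdj hGu).verts
      (G.subgraphOfAdj hGv).verts := by
    simp only [verts_sup, deleteVerts_verts, subgraphOfAdj_verts, Set.disjoint_right]
    grind
  refine ⟨M.deleteVerts {u, v} ⊔ G.subgraphOfAdj hGu ⊔ G.subgraphOfAdj hGv, ?_, ?_⟩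
  · refine ((hM.deleteVerts_pair huv).sup (.subgraphOfAdj hGu) ?_).sup (.subgraphOfAdj hGv) ?_
    · exact hdisj₁.mono (support_subset_verts _) (support_subset_verts _)
    · exact hdisj₂.mono (support_subset_verts _) (support_subset_verts _)
  · rw [edgeSet_sup, edgeSet_sup, hM.edgeSet_deleteVerts_pair huv, edgeSet_subgraphOfAdj,
      edgeSet_subgraphOfAdj, Set.union_singleton, Set.union_singleton]

lemma exists_ncard_edgeSet_gt_of_adj_unmatched [Finite V] (hM : M.IsMatching) {u v u' v' : V}
    (huv : M.Adj u v) (hu' : u' ∉ M.verts) (hv' : v' ∉ M.verts) (hne : u' ≠ v')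
    (hGu : G.Adj u u') (hGv : G.Adj v v') :
    ∃ M' : G.Subgraph, M'.IsMatching ∧ M.edgeSet.ncard < M'.edgeSet.ncard := by
  obtain ⟨M', hM', hE⟩ := hM.exists_edgeSet_eq_augment huv hu' hv' hne hGu hGv
  refine ⟨M', hM', ?_⟩
  have huu' : s(u, u') ∉ M.edgeSet := fun h => hu' (M.edge_vert h.symm)
  have hvv' : s(v, v') ∉ insert s(u, u') (M.edgeSet \ {s(u, v)}) := by
    rintro (h | ⟨h, -⟩)
    · rcases Sym2.eq_iff.mp h with ⟨rfl, -⟩ | ⟨rfl, -⟩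
      · exact (M.adj_sub huv).ne rfl
      · exact hu' (M.edge_vert huv.symm)
    · exact hv' (M.edge_vert h.symm)
  have hremove := Set.ncard_sdiff_singleton_add_one (show s(u, v) ∈ M.edgeSet from huv)
  rw [hE, Set.ncard_insert_of_notMem hvv', Set.ncard_insert_of_notMem fun h => huu' h.1]
  omega

end SimpleGraph.Subgraph.IsMatching

theorem stmt12 {V : Type*} [Fintype V] (G : SimpleGraph V)
    (M : G.Subgraph) (hM : M.IsMatching)
    (hmax : ∀ M' : G.Subgraph, M'.IsMatching → M'.edgeSet.ncard ≤ M.edgeSet.ncard) :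
    -- for e = (u,v) ∈ M there are no two distinct vertices u', v' outside V(M)
    -- with u' adjacent to u and v' adjacent to v
    (∀ u v : V, M.Adj u v → ¬ ∃ u' v' : V, u' ≠ v' ∧ u' ∉ M.support ∧ v' ∉ M.support ∧
      G.Adj u u' ∧ G.Adj v v') ∧
    -- consequently some endpoint's neighborhood outside V(M) contains the other's
    (∀ u v : V, M.Adj u v →
      {x : V | x ∉ M.support ∧ G.Adj v x} ⊆ {x : V | x ∉ M.support ∧ G.Adj u x} ∨
      {x : V | x ∉ M.support ∧ G.Adj u x} ⊆ {x : V | x ∉ M.support ∧ G.Adj v x}) := by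
  have no_pair : ∀ u v : V, M.Adj u v → ¬ ∃ u' v' : V, u' ≠ v' ∧ u' ∉ M.support ∧
      v' ∉ M.support ∧ G.Adj u u' ∧ G.Adj v v' := by
    rintro u v huv ⟨u', v', hne, hu', hv', hGu, hGv⟩
    rw [hM.support_eq_verts] at hu' hv'
    obtain ⟨M', hM', hlt⟩ :=
      hM.exists_ncard_edgeSet_gt_of_adj_unmatched huv hu' hv' hne hGu hGv
    exact (hmax M' hM').not_gt hlt
  refine ⟨no_pair, fun u v huv => ?_⟩
  by_contra! h
  obtain ⟨v', ⟨hv', hGv⟩, hv'u⟩ := Set.not_subset.mp h.1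
  obtain ⟨u', ⟨hu', hGu⟩, -⟩ := Set.not_subset.mp h.2
  exact no_pair u v huv ⟨u', v', fun h => hv'u ⟨hv', h ▸ hGu⟩, hu', hv', hGu, hGv⟩
end

section
/- For every k ≥ 2 and γ ≥ 3, the minimum number of vertices of a connected k-uniform hypergraph with distance-2 domination number at least γ satisfies kγ ≤ n_{dc}(k,γ,2) ≤ kγ + max{k,γ}. -/
lemma dist_two_cases {V : Type*} {G : SimpleGraph V} {u v : V}
    (hr : G.Reachable u v) (hd : G.dist u v ≤ 2) :
    u = v ∨ G.Adj u v ∨ ∃ w, G.Adj u w ∧ G.Adj w v := by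
  obtain ⟨p, hp⟩ := hr.exists_walk_length_eq_dist
  rw [← hp] at hd
  clear hp
  cases p with
  | nil => exact Or.inl rfl
  | cons h q =>
    cases q with
    | nil => exact Or.inr (Or.inl h)
    | cons h' q' =>
      cases q' with
      | nil => exact Or.inr (Or.inr ⟨_, h, h'⟩)
      | cons h'' q'' => simp only [SimpleGraph.Walk.length_cons] at hd; omega

def liftF (N : ℕ) (s : Finset ℕ) : Finset (Fin N) :=
  (s.filter (· < N)).attachFin (fun m hm => (Finset.mem_filter.mp hm).2)

lemma mem_liftF {N : ℕ} {s : Finset ℕ} {v : Fin N} : v ∈ liftF N s ↔ (v : ℕ) ∈ s := by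
  simp [liftF, Finset.mem_attachFin, Finset.mem_filter, v.isLt]

lemma card_liftF {N : ℕ} {s : Finset ℕ} (h : ∀ x ∈ s, x < N) : (liftF N s).card = s.card := by
  rw [liftF, Finset.card_attachFin, Finset.filter_true_of_mem h]

namespace UB

variable (k γ : ℕ)

def N : ℕ := k * γ + max k γ

def A (i : ℕ) : Finset (Fin (N k γ)) := liftF _ (Finset.Ico (i*k) (i*k+k))

def f (i : ℕ) : Finset (Fin (N k γ)) :=
  liftF _ (insert (k*γ+i) (Finset.Ico (i*k+1) (i*k+k)))

def Cs : Finset (Fin (N k γ)) := liftF _ (Finset.Ico (k*γ) (N k γ))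

def E : Finset (Finset (Fin (N k γ))) :=
  ((Finset.range γ).image (A k γ)) ∪ ((Finset.range γ).image (f k γ)) ∪
    ((Cs k γ).powerset.filter (fun S => S.card = k))

variable {k γ}

lemma mem_A {i : ℕ} {v : Fin (N k γ)} :
    v ∈ A k γ i ↔ i*k ≤ (v : ℕ) ∧ (v : ℕ) < i*k+k := by
  simp [A, mem_liftF, Finset.mem_Ico]

lemma mem_f {i : ℕ} {v : Fin (N k γ)} :
    v ∈ f k γ i ↔ (v : ℕ) = k*γ+i ∨ (i*k+1 ≤ (v : ℕ) ∧ (v : ℕ) < i*k+k) := by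
  simp [f, mem_liftF, Finset.mem_Ico, Finset.mem_insert]

lemma mem_Cs {v : Fin (N k γ)} : v ∈ Cs k γ ↔ k*γ ≤ (v : ℕ) := by
  simp [Cs, mem_liftF, Finset.mem_Ico, v.isLt]

lemma mem_E {e : Finset (Fin (N k γ))} :
    e ∈ E k γ ↔ (∃ i < γ, e = A k γ i) ∨ (∃ i < γ, e = f k γ i) ∨
      (e ⊆ Cs k γ ∧ e.card = k) := by
  simp only [E, Finset.mem_union, Finset.mem_image, Finset.mem_range, Finset.mem_filter,
    Finset.mem_powerset]
  constructor
  · rintro ((⟨i, hi, rfl⟩ | ⟨i, hi, rfl⟩) | h)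
    · exact Or.inl ⟨i, hi, rfl⟩
    · exact Or.inr (Or.inl ⟨i, hi, rfl⟩)
    · exact Or.inr (Or.inr h)
  · rintro (⟨i, hi, rfl⟩ | ⟨i, hi, rfl⟩ | h)
    · exact Or.inl (Or.inl ⟨i, hi, rfl⟩)
    · exact Or.inl (Or.inr ⟨i, hi, rfl⟩)
    · exact Or.inr h

lemma ik_k_le (hk : 1 ≤ k) {i : ℕ} (hi : i < γ) : i*k + k ≤ k*γ :=
  calc i*k + k = (i+1)*k := by rw [add_mul, one_mul]
    _ ≤ γ*k := Nat.mul_le_mul hi le_rfl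
    _ = k*γ := mul_comm _ _

lemma kγ_le_N : k*γ ≤ N k γ := Nat.le_add_right _ _

lemma ci_lt_N {i : ℕ} (hi : i < γ) : k*γ + i < N k γ := by
  have h : i < max k γ := lt_of_lt_of_le hi (le_max_right k γ)
  simp only [N]; omega

lemma idx_eq (hk : 1 ≤ k) {i j x : ℕ} (h1 : i*k ≤ x) (h2 : x < i*k+k)
    (h3 : j*k ≤ x) (h4 : x < j*k+k) : i = j := by
  have a1 : i*k < (j+1)*k := by rw [add_mul, one_mul]; omega
  have a2 : j*k < (i+1)*k := by rw [add_mul, one_mul]; omega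
  have b1 := lt_of_mul_lt_mul_right a1 (Nat.zero_le k)
  have b2 := lt_of_mul_lt_mul_right a2 (Nat.zero_le k)
  omega

lemma adj_iff {x y : Fin (N k γ)} :
    (hGraph (E k γ)).Adj x y ↔ x ≠ y ∧ ∃ e ∈ E k γ, x ∈ e ∧ y ∈ e := by
  rw [hGraph, SimpleGraph.fromRel_adj]
  constructor
  · rintro ⟨hne, (⟨e, he, h1, h2⟩ | ⟨e, he, h1, h2⟩)⟩
    · exact ⟨hne, e, he, h1, h2⟩
    · exact ⟨hne, e, he, h2, h1⟩
  · rintro ⟨hne, e, he, h1, h2⟩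
    exact ⟨hne, Or.inl ⟨e, he, h1, h2⟩⟩

lemma edge_of_low (hk : 1 ≤ k) {e : Finset (Fin (N k γ))} (he : e ∈ E k γ)
    {x : Fin (N k γ)} (hx : x ∈ e) {i : ℕ} (hi : i < γ)
    (h1 : i*k ≤ (x : ℕ)) (h2 : (x : ℕ) < i*k+k) :
    e = A k γ i ∨ e = f k γ i := by
  have hupper := ik_k_le hk hi
  rcases mem_E.mp he with ⟨j, hj, rfl⟩ | ⟨j, hj, rfl⟩ | ⟨hsub, _⟩
  · rw [mem_A] at hx
    have := idx_eq hk h1 h2 hx.1 hx.2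
    subst this; exact Or.inl rfl
  · rw [mem_f] at hx
    rcases hx with hx | hx
    · omega
    · have := idx_eq hk h1 h2 (by omega) hx.2
      subst this; exact Or.inr rfl
  · have := mem_Cs.mp (hsub hx)
    omega

lemma edge_of_t (hk : 1 ≤ k) {e : Finset (Fin (N k γ))} (he : e ∈ E k γ)
    {x : Fin (N k γ)} (hx : x ∈ e) {i : ℕ} (hi : i < γ) (hval : (x : ℕ) = i*k) :
    e = A k γ i := by
  have hupper := ik_k_le hk hi
  rcases edge_of_low hk he hx hi (le_of_eq hval.symm) (by omega) with h | h
  · exact h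
  · subst h
    rw [mem_f] at hx
    omega

lemma ball (hk : 1 ≤ k) {i : ℕ} (hi : i < γ) {d ti : Fin (N k γ)} (hti : (ti : ℕ) = i*k)
    (h : d = ti ∨ (hGraph (E k γ)).Adj d ti ∨
      ∃ w, (hGraph (E k γ)).Adj d w ∧ (hGraph (E k γ)).Adj w ti) :
    (i*k ≤ (d : ℕ) ∧ (d : ℕ) < i*k + k) ∨ (d : ℕ) = k*γ + i := by
  rcases h with rfl | h | ⟨w, h1, h2⟩
  · left; omega
  · obtain ⟨hne, e, he, hd, hti'⟩ := adj_iff.mp h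
    have := edge_of_t hk he hti' hi hti
    subst this
    exact Or.inl (mem_A.mp hd)
  · obtain ⟨_, e, he, hw, hti'⟩ := adj_iff.mp h2
    have he' := edge_of_t hk he hti' hi hti
    subst he'
    rw [mem_A] at hw
    obtain ⟨_, e', he2, hd, hw'⟩ := adj_iff.mp h1
    rcases edge_of_low hk he2 hw' hi hw.1 hw.2 with rfl | rfl
    · exact Or.inl (mem_A.mp hd)
    · rw [mem_f] at hd
      rcases hd with h | h
      · exact Or.inr h
      · exact Or.inl ⟨by omega, h.2⟩

theorem upper (k γ : ℕ) (hk : 2 ≤ k) (hγ : 3 ≤ γ) :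
    ∃ (N : ℕ) (E : Finset (Finset (Fin N))),
      N ≤ k * γ + max k γ ∧ (hGraph E).Connected ∧
      (∀ v : Fin N, ∃ e ∈ E, v ∈ e) ∧ (∀ e ∈ E, e.card = k) ∧
      γ ≤ gammad E 2 := by
  classical
  have hk1 : 1 ≤ k := by omega
  have hk0 : 0 < k := by omega
  have hmax : k ≤ max k γ := le_max_left k γ
  have hc0lt : k*γ < N k γ := by
    have : 0 < max k γ := by omega
    simp only [N]; omega
  have hCcard : (Cs k γ).card = max k γ := by
    rw [Cs, card_liftF (fun x hx => (Finset.mem_Ico.mp hx).2), Nat.card_Ico]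
    simp [N]
  refine ⟨N k γ, E k γ, le_rfl, ?_, ?_, ?_, ?_⟩
  · -- Connected
    set c0 : Fin (N k γ) := ⟨k*γ, hc0lt⟩ with hc0
    have step : ∀ {x y : Fin (N k γ)}, (∃ e ∈ E k γ, x ∈ e ∧ y ∈ e) →
        (hGraph (E k γ)).Reachable x y := by
      intro x y h
      by_cases hxy : x = y
      · subst hxy; exact SimpleGraph.Reachable.refl x
      · exact (adj_iff.mpr ⟨hxy, h⟩).reachable
    have hCreach : ∀ x : Fin (N k γ), k*γ ≤ (x : ℕ) →
        (hGraph (E k γ)).Reachable x c0 := by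
      intro x hx
      apply step
      have hsub : ({x, c0} : Finset (Fin (N k γ))) ⊆ Cs k γ := by
        intro z hz
        rcases Finset.mem_insert.mp hz with rfl | hz
        · exact mem_Cs.mpr hx
        · rw [Finset.mem_singleton.mp hz]
          exact mem_Cs.mpr (le_refl _)
      have hle2 : ({x, c0} : Finset (Fin (N k γ))).card ≤ k :=
        le_trans (Finset.card_insert_le _ _) (by rw [Finset.card_singleton]; omega)
      have hCk : k ≤ (Cs k γ).card := by rw [hCcard]; exact hmax
      obtain ⟨S, hS1, hS2, hS3⟩ := Finset.exists_subsuperset_card_eq hsub hle2 hCk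
      exact ⟨S, mem_E.mpr (Or.inr (Or.inr ⟨hS2, hS3⟩)),
        hS1 (Finset.mem_insert_self _ _),
        hS1 (Finset.mem_insert_of_mem (Finset.mem_singleton_self c0))⟩
    have hall : ∀ x : Fin (N k γ), (hGraph (E k γ)).Reachable x c0 := by
      intro x
      by_cases hx : (x : ℕ) < k*γ
      · obtain ⟨i, hb1, hb2, hiγ⟩ : ∃ i, i*k ≤ (x : ℕ) ∧ (x : ℕ) < i*k+k ∧ i < γ := by
          refine ⟨(x : ℕ) / k, ?_, ?_, ?_⟩
          · rw [mul_comm]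
            have h1 := Nat.mod_add_div (x : ℕ) k
            omega
          · rw [mul_comm]
            have h1 := Nat.mod_add_div (x : ℕ) k
            have h2 := Nat.mod_lt (x : ℕ) hk0
            omega
          · rw [Nat.div_lt_iff_lt_mul hk0]
            calc (x : ℕ) < k*γ := hx
              _ = γ*k := mul_comm _ _
        have hupper := ik_k_le hk1 hiγ
        have halt : i*k+1 < N k γ := by
          have := kγ_le_N (k := k) (γ := γ); omega
        have hcilt : k*γ+i < N k γ := ci_lt_N hiγ
        have r1 : (hGraph (E k γ)).Reachable x ⟨i*k+1, halt⟩ := by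
          apply step
          refine ⟨A k γ i, mem_E.mpr (Or.inl ⟨i, hiγ, rfl⟩), ?_, ?_⟩
          · rw [mem_A]; exact ⟨hb1, hb2⟩
          · rw [mem_A]; simp only [Fin.val_mk]; omega
        have r2 : (hGraph (E k γ)).Reachable ⟨i*k+1, halt⟩ ⟨k*γ+i, hcilt⟩ := by
          apply step
          refine ⟨f k γ i, mem_E.mpr (Or.inr (Or.inl ⟨i, hiγ, rfl⟩)), ?_, ?_⟩
          · rw [mem_f]; simp only [Fin.val_mk]; omega
          · rw [mem_f]; exact Or.inl rfl
        exact r1.trans (r2.trans (hCreach ⟨k*γ+i, hcilt⟩ (by simp only [Fin.val_mk]; omega)))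
      · exact hCreach x (by omega)
    haveI : Nonempty (Fin (N k γ)) := ⟨c0⟩
    exact SimpleGraph.Connected.mk (fun u v => (hall u).trans (hall v).symm)
  · -- cover
    intro v
    by_cases hv : (v : ℕ) < k*γ
    · obtain ⟨i, hb1, hb2, hiγ⟩ : ∃ i, i*k ≤ (v : ℕ) ∧ (v : ℕ) < i*k+k ∧ i < γ := by
        refine ⟨(v : ℕ) / k, ?_, ?_, ?_⟩
        · rw [mul_comm]
          have h1 := Nat.mod_add_div (v : ℕ) k
          omega
        · rw [mul_comm]
          have h1 := Nat.mod_add_div (v : ℕ) k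
          have h2 := Nat.mod_lt (v : ℕ) hk0
          omega
        · rw [Nat.div_lt_iff_lt_mul hk0]
          calc (v : ℕ) < k*γ := hv
            _ = γ*k := mul_comm _ _
      exact ⟨A k γ i, mem_E.mpr (Or.inl ⟨i, hiγ, rfl⟩), mem_A.mpr ⟨hb1, hb2⟩⟩
    · have hvC : v ∈ Cs k γ := mem_Cs.mpr (by omega)
      have h1 : ({v} : Finset (Fin (N k γ))).card ≤ k := by
        rw [Finset.card_singleton]; omega
      have h2 : k ≤ (Cs k γ).card := by rw [hCcard]; exact hmax
      obtain ⟨S, hS1, hS2, hS3⟩ := Finset.exists_subsuperset_card_eq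
        (Finset.singleton_subset_iff.mpr hvC) h1 h2
      exact ⟨S, mem_E.mpr (Or.inr (Or.inr ⟨hS2, hS3⟩)), hS1 (Finset.mem_singleton_self v)⟩
  · -- uniform
    intro e he
    rcases mem_E.mp he with ⟨i, hi, rfl⟩ | ⟨i, hi, rfl⟩ | ⟨_, hcard⟩
    · have hupper := ik_k_le hk1 hi
      have hN := kγ_le_N (k := k) (γ := γ)
      rw [A, card_liftF (fun x hx => by rw [Finset.mem_Ico] at hx; omega), Nat.card_Ico]
      omega
    · have hupper := ik_k_le hk1 hi
      have hN := kγ_le_N (k := k) (γ := γ)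
      have hci : k*γ + i < N k γ := ci_lt_N hi
      rw [f, card_liftF (fun x hx => by
        rcases Finset.mem_insert.mp hx with rfl | hx
        · exact hci
        · rw [Finset.mem_Ico] at hx; omega)]
      rw [Finset.card_insert_of_notMem (by rw [Finset.mem_Ico]; omega), Nat.card_Ico]
      omega
    · exact hcard
  · -- γ ≤ gammad
    have hdomU : distDom (E k γ) 2 Finset.univ := by
      intro v
      exact ⟨v, Finset.mem_univ v, SimpleGraph.Reachable.refl v,
        by rw [SimpleGraph.dist_self]; omega⟩
    refine le_csInf ⟨Finset.univ.card, ⟨Finset.univ, rfl, hdomU⟩⟩ ?_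
    rintro n ⟨D, rfl, hdom⟩
    have Hsel : ∀ i : ℕ, ∃ u : Fin (N k γ), i < γ →
        u ∈ D ∧ ((i*k ≤ (u : ℕ) ∧ (u : ℕ) < i*k+k) ∨ (u : ℕ) = k*γ+i) := by
      intro i
      by_cases hi : i < γ
      · have hupper := ik_k_le hk1 hi
        have hN := kγ_le_N (k := k) (γ := γ)
        have hti : i*k < N k γ := by omega
        obtain ⟨u, hu, hr, hd⟩ := hdom ⟨i*k, hti⟩
        exact ⟨u, fun _ => ⟨hu, ball hk1 hi rfl (dist_two_cases hr hd)⟩⟩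
      · exact ⟨⟨k*γ, hc0lt⟩, fun h => absurd h hi⟩
    choose g hg using Hsel
    have key : (Finset.range γ).card ≤ D.card := by
      apply Finset.card_le_card_of_injOn g
      · intro i hi
        exact (hg i (Finset.mem_range.mp hi)).1
      · intro i hi j hj hij
        simp only [Finset.coe_range, Set.mem_Iio] at hi hj
        have Bi := (hg i hi).2
        have Bj := (hg j hj).2
        have hv : ((g i : Fin (N k γ)) : ℕ) = ((g j : Fin (N k γ)) : ℕ) := by rw [hij]
        have hui := ik_k_le hk1 hi
        have huj := ik_k_le hk1 hj
        rcases Bi with ⟨a1, a2⟩ | a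
        · rcases Bj with ⟨b1, b2⟩ | b
          · exact idx_eq hk1 a1 a2 (by omega) (by omega)
          · omega
        · rcases Bj with ⟨b1, b2⟩ | b
          · omega
          · omega
    simpa [Finset.card_range] using key

end UB


lemma reach_dist_two_s18 {V : Type*} {G : SimpleGraph V} {u w v : V}
    (h1 : u = w ∨ G.Adj u w) (h2 : w = v ∨ G.Adj w v) :
    G.Reachable u v ∧ G.dist u v ≤ 2 := by
  have hp : ∃ p : G.Walk u v, p.length ≤ 2 := by
    rcases h1 with rfl | h1
    · rcases h2 with rfl | h2
      · exact ⟨.nil, by simp⟩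
      · exact ⟨h2.toWalk, by simp⟩
    · rcases h2 with rfl | h2
      · exact ⟨h1.toWalk, by simp⟩
      · exact ⟨.cons h1 h2.toWalk, by simp⟩
  obtain ⟨p, hp⟩ := hp
  exact ⟨⟨p⟩, le_trans (SimpleGraph.dist_le p) hp⟩

section LB

theorem lower_bound (k γ : ℕ) (hk : 2 ≤ k) (hγ : 3 ≤ γ)
    (V : Type) [Fintype V] (E : Finset (Finset V))
    (hconn : (hGraph E).Connected) (hcover : ∀ v : V, ∃ e ∈ E, v ∈ e)
    (hunif : ∀ e ∈ E, e.card = k) (hγd : γ ≤ gammad E 2) :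
    k * γ ≤ Fintype.card V := by
  classical
  haveI : Nonempty V := hconn.nonempty
  set T := E.powerset.filter (fun M => ∀ a ∈ M, ∀ b ∈ M, a ≠ b → Disjoint a b) with hT
  have hTne : T.Nonempty := ⟨∅, by simp [hT]⟩
  obtain ⟨M, hMT, hMmax⟩ := T.exists_max_image Finset.card hTne
  rw [hT, Finset.mem_filter, Finset.mem_powerset] at hMT
  obtain ⟨hME, hMdisj⟩ := hMT
  have hmeet : ∀ e ∈ E, ∃ m ∈ M, ¬ Disjoint e m := by
    intro e he
    by_contra hco
    push_neg at hco
    have heM : e ∉ M := by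
      intro hmem
      have h1 : e = ∅ := by simpa using disjoint_self.mp (hco e hmem)
      have h2 := hunif e he
      rw [h1] at h2
      simp at h2
      omega
    have hins : insert e M ∈ T := by
      rw [hT, Finset.mem_filter, Finset.mem_powerset]
      refine ⟨Finset.insert_subset he hME, ?_⟩
      intro a ha b hb hne
      rcases Finset.mem_insert.mp ha with ha | ha
      · rcases Finset.mem_insert.mp hb with hb | hb
        · exact absurd (ha.trans hb.symm) hne
        · rw [ha]; exact hco b hb
      · rcases Finset.mem_insert.mp hb with hb | hb
        · rw [hb]; exact (hco a ha).symm
        · exact hMdisj a ha b hb hne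
    have := hMmax _ hins
    rw [Finset.card_insert_of_notMem heM] at this
    omega
  have hMnon : ∀ m ∈ M, m.Nonempty := by
    intro m hm
    rw [← Finset.card_pos, hunif m (hME hm)]
    omega
  let pick : Finset V → V := fun s => if h : s.Nonempty then h.choose else Classical.arbitrary V
  have hpick : ∀ m ∈ M, pick m ∈ m := by
    intro m hm
    simp only [pick, dif_pos (hMnon m hm)]
    exact (hMnon m hm).choose_spec
  have hdom : distDom E 2 (M.image pick) := by
    intro v
    obtain ⟨e, he, hv⟩ := hcover v
    obtain ⟨m, hm, hnd⟩ := hmeet e he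
    obtain ⟨w, hwe, hwm⟩ := Finset.not_disjoint_iff.mp hnd
    refine ⟨pick m, Finset.mem_image_of_mem _ hm, ?_⟩
    apply reach_dist_two_s18 (w := w)
    · by_cases h : pick m = w
      · exact Or.inl h
      · exact Or.inr ((SimpleGraph.fromRel_adj _ _ _).mpr
          ⟨h, Or.inl ⟨m, hME hm, hpick m hm, hwm⟩⟩)
    · by_cases h : w = v
      · exact Or.inl h
      · exact Or.inr ((SimpleGraph.fromRel_adj _ _ _).mpr
          ⟨h, Or.inl ⟨e, he, hwe, hv⟩⟩)
  have h1 : γ ≤ (M.image pick).card :=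
    le_trans hγd (Nat.sInf_le ⟨M.image pick, rfl, hdom⟩)
  have h2 : (M.image pick).card ≤ M.card := Finset.card_image_le
  have h3 : k * M.card ≤ Fintype.card V := by
    calc k * M.card = ∑ _m ∈ M, k := by rw [Finset.sum_const, smul_eq_mul, mul_comm]
      _ = ∑ m ∈ M, m.card := Finset.sum_congr rfl (fun m hm => (hunif m (hME hm)).symm)
      _ = (M.biUnion id).card := (Finset.card_biUnion (fun a ha b hb hab => hMdisj a ha b hb hab)).symm
      _ ≤ Fintype.card V := Finset.card_le_univ _
  calc k * γ ≤ k * M.card := Nat.mul_le_mul_left k (le_trans h1 h2)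
    _ ≤ _ := h3

end LB


theorem stmt18 (k γ : ℕ) (hk : 2 ≤ k) (hγ : 3 ≤ γ) :
    -- lower bound kγ ≤ n_dc(k,γ,2):
    (∀ (V : Type) [Fintype V] (E : Finset (Finset V)),
      (hGraph E).Connected → (∀ v : V, ∃ e ∈ E, v ∈ e) →
      (∀ e ∈ E, e.card = k) → γ ≤ gammad E 2 →
      k * γ ≤ Fintype.card V) ∧
    -- upper bound n_dc(k,γ,2) ≤ kγ + max{k,γ}:
    (∃ (N : ℕ) (E : Finset (Finset (Fin N))),
      N ≤ k * γ + max k γ ∧ (hGraph E).Connected ∧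
      (∀ v : Fin N, ∃ e ∈ E, v ∈ e) ∧ (∀ e ∈ E, e.card = k) ∧
      γ ≤ gammad E 2) := by
  exact ⟨fun V _ E hconn hcover hunif hγd =>
    lower_bound k γ hk hγ V E hconn hcover hunif hγd, UB.upper k γ hk hγ⟩
end
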